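/- arXiv:2403.17951 — 2 statements merged into one kernel-verified Lean document; each statement's English description precedes it below -/
import Mathlib

section
/- Let Φ be a finite reduced crystallographic root system in a finite-dimensional real inner product space, and let S ⊆ Φ be a closed subset. If β₁, β₂, …, β_k ∈ S (not necessarily distinct) and the sum β₁ + β₂ + ⋯ + β_k lies in Φ, then β₁ + β₂ + ⋯ + β_k ∈ S. -/
open scoped RealInnerProductSpace

/-- A finite reduced crystallographic root system in a finite-dimensional real
inner product space. -/
structure IsRootSystem {V : Type*} [NormedAddCommGroup V] [InnerProductSpace ℝ V]
    [FiniteDimensional ℝ V] (Φ : Set V) : Prop where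
  finite : Φ.Finite
  ne_zero : ∀ α ∈ Φ, α ≠ 0
  spans : Submodule.span ℝ Φ = ⊤
  reduced : ∀ α ∈ Φ, ∀ t : ℝ, t • α ∈ Φ → t = 1 ∨ t = -1
  reflection_mem : ∀ α ∈ Φ, ∀ β ∈ Φ, β - (2 * ⟪β, α⟫ / ⟪α, α⟫) • α ∈ Φ
  crystallographic : ∀ α ∈ Φ, ∀ β ∈ Φ, ∃ n : ℤ, 2 * ⟪β, α⟫ / ⟪α, α⟫ = (n : ℝ)

/-- A subset `S` of a root system `Φ` is closed if for any `x, y ∈ S`,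
`x + y ∈ Φ` implies `x + y ∈ S`. -/
def IsClosedSubset {V : Type*} [NormedAddCommGroup V] [InnerProductSpace ℝ V]
    (Φ S : Set V) : Prop :=
  S ⊆ Φ ∧ ∀ x ∈ S, ∀ y ∈ S, x + y ∈ Φ → x + y ∈ S

lemma inner_self_pos_of_ne_zero {V : Type*} [NormedAddCommGroup V] [InnerProductSpace ℝ V]
    {x : V} (hx : x ≠ 0) : (0 : ℝ) < ⟪x, x⟫ := by
  rw [real_inner_self_eq_norm_sq]
  have h : ‖x‖ ≠ 0 := norm_ne_zero_iff.mpr hx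
  positivity

/-- Negation of a root is a root. -/
lemma IsRootSystem.neg_mem {V : Type*} [NormedAddCommGroup V] [InnerProductSpace ℝ V]
    [FiniteDimensional ℝ V] {Φ : Set V} (hΦ : IsRootSystem Φ) {α : V} (hα : α ∈ Φ) :
    -α ∈ Φ := by
  have h := hΦ.reflection_mem α hα α hα
  have ha : ⟪α, α⟫ ≠ (0 : ℝ) := inner_self_ne_zero.mpr (hΦ.ne_zero α hα)
  have h2 : 2 * ⟪α, α⟫ / ⟪α, α⟫ = (2 : ℝ) := by field_simp
  rw [h2] at h
  have : α - (2 : ℝ) • α = -α := by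
    rw [two_smul]; abel
  rwa [this] at h

/-- If two distinct roots have positive inner product, their difference is a root. -/
lemma IsRootSystem.sub_mem {V : Type*} [NormedAddCommGroup V] [InnerProductSpace ℝ V]
    [FiniteDimensional ℝ V] {Φ : Set V} (hΦ : IsRootSystem Φ) {α β : V} (hα : α ∈ Φ)
    (hβ : β ∈ Φ) (hpos : 0 < ⟪α, β⟫) (hne : α ≠ β) : α - β ∈ Φ := by
  have ha : (0 : ℝ) < ⟪α, α⟫ := inner_self_pos_of_ne_zero (hΦ.ne_zero α hα)
  have hb : (0 : ℝ) < ⟪β, β⟫ := inner_self_pos_of_ne_zero (hΦ.ne_zero β hβ)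
  obtain ⟨n, hn⟩ := hΦ.crystallographic α hα β hβ
  obtain ⟨m, hm⟩ := hΦ.crystallographic β hβ α hα
  have hsymm : ⟪β, α⟫ = ⟪α, β⟫ := real_inner_comm α β
  -- n, m are positive integers
  have hn_pos : (0 : ℝ) < (n : ℝ) := by
    rw [← hn, hsymm]; positivity
  have hm_pos : (0 : ℝ) < (m : ℝ) := by
    rw [← hm]; positivity
  have hn1 : 1 ≤ n := by exact_mod_cast hn_pos
  have hm1 : 1 ≤ m := by exact_mod_cast hm_pos
  by_cases hncase : n = 1
  · -- s_α(β) = β - α ∈ Φ, hence α - β = -(β - α) ∈ Φ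
    have h := hΦ.reflection_mem α hα β hβ
    rw [hn, hncase] at h
    simp only [Int.cast_one, one_smul] at h
    have := hΦ.neg_mem h
    rwa [neg_sub] at this
  · by_cases hmcase : m = 1
    · -- s_β(α) = α - β ∈ Φ
      have h := hΦ.reflection_mem β hβ α hα
      rw [hm, hmcase] at h
      simpa using h
    · -- n ≥ 2 and m ≥ 2 : contradiction
      exfalso
      have hn2 : (2 : ℝ) ≤ (n : ℝ) := by exact_mod_cast (by omega : (2:ℤ) ≤ n)
      have hm2 : (2 : ℝ) ≤ (m : ℝ) := by exact_mod_cast (by omega : (2:ℤ) ≤ m)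
      -- from 2⟪β,α⟫/⟪α,α⟫ ≥ 2 get ⟪α,β⟫ ≥ ⟪α,α⟫
      have hca : ⟪α, α⟫ ≤ ⟪α, β⟫ := by
        rw [← hn, hsymm, le_div_iff₀ ha] at hn2
        linarith
      have hcb : ⟪β, β⟫ ≤ ⟪α, β⟫ := by
        rw [← hm, le_div_iff₀ hb] at hm2
        linarith
      have hd : α - β ≠ 0 := sub_ne_zero.mpr hne
      have hdp : (0 : ℝ) < ⟪α - β, α - β⟫ := inner_self_pos_of_ne_zero hd
      rw [real_inner_sub_sub_self] at hdp
      linarith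

/-- Multiset version: a nonempty multiset of elements of a closed set whose sum is a
root has its sum in the closed set. -/
lemma root_multiset_sum_mem {V : Type*} [NormedAddCommGroup V] [InnerProductSpace ℝ V]
    [FiniteDimensional ℝ V] {Φ S : Set V} (hΦ : IsRootSystem Φ)
    (hS : IsClosedSubset Φ S) :
    ∀ n : ℕ, ∀ M : Multiset V, M.card = n → M ≠ 0 → (∀ x ∈ M, x ∈ S) →
      M.sum ∈ Φ → M.sum ∈ S := by
  intro n
  induction n with
  | zero => intro M hc h0 _ _; exact absurd (Multiset.card_eq_zero.mp hc) h0
  | succ n ih =>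
    intro M hc h0 hmem hsum
    classical
    set γ := M.sum with hγ
    have hγne : γ ≠ 0 := hΦ.ne_zero γ hsum
    -- find x ∈ M with positive inner product with γ
    have hex : ∃ x ∈ M, (0 : ℝ) < ⟪γ, x⟫ := by
      by_contra hcon
      push_neg at hcon
      have h1 : ⟪γ, γ⟫ = (M.map (fun y => ⟪γ, y⟫)).sum := by
        rw [hγ]; exact map_multiset_sum (innerSL ℝ γ) M
      have h2 : (M.map (fun y => ⟪γ, y⟫)).sum ≤ 0 := by
        have := Multiset.sum_le_card_nsmul (M.map (fun y => ⟪γ, y⟫)) 0 (by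
          intro a haM
          obtain ⟨y, hy, rfl⟩ := Multiset.mem_map.mp haM
          exact hcon y hy)
        simpa using this
      have := inner_self_pos_of_ne_zero hγne
      linarith [h1 ▸ this]
    obtain ⟨x, hxM, hxpos⟩ := hex
    have hxS : x ∈ S := hmem x hxM
    have hxΦ : x ∈ Φ := hS.1 hxS
    by_cases hγx : γ = x
    · rw [hγx] at *; exact hxS
    · have hsub : γ - x ∈ Φ := hΦ.sub_mem hsum hxΦ hxpos hγx
      set M' := M.erase x with hM'
      have hcons : x ::ₘ M' = M := Multiset.cons_erase hxM
      have hsum' : M'.sum = γ - x := by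
        have : M.sum = x + M'.sum := by rw [← hcons, Multiset.sum_cons]
        rw [hγ] at *; rw [this]; abel
      have hM'card : M'.card = n := by
        have := congrArg Multiset.card hcons
        simp [Multiset.card_cons] at this
        omega
      have hM'ne : M' ≠ 0 := by
        intro h
        rw [h] at hsum'
        simp only [Multiset.sum_zero] at hsum'
        exact hΦ.ne_zero _ hsub hsum'.symm
      have hM'mem : ∀ y ∈ M', y ∈ S := fun y hy => hmem y (Multiset.mem_of_mem_erase hy)
      have hM'S : M'.sum ∈ S := ih M' hM'card hM'ne hM'mem (hsum' ▸ hsub)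
      have := hS.2 x hxS M'.sum hM'S (by rw [hsum']; simpa using hsum)
      rw [hsum'] at this
      simpa using this

/-- If `β 0, …, β (k-1) ∈ S` (not necessarily distinct) for a closed subset `S` of
the root system `Φ`, and the sum of the `β i` lies in `Φ`, then the sum lies in `S`. -/
theorem closed_subset_sum_mem {V : Type*} [NormedAddCommGroup V] [InnerProductSpace ℝ V]
    [FiniteDimensional ℝ V] (Φ S : Set V) (hΦ : IsRootSystem Φ)
    (hS : IsClosedSubset Φ S) (k : ℕ) (hk : 1 ≤ k) (β : ℕ → V)
    (hβ : ∀ i < k, β i ∈ S) (hsum : ∑ i ∈ Finset.range k, β i ∈ Φ) :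
    ∑ i ∈ Finset.range k, β i ∈ S := by
  have heq : ∑ i ∈ Finset.range k, β i = ((Finset.range k).val.map β).sum := rfl
  rw [heq] at *
  refine root_multiset_sum_mem hΦ hS k _ ?_ ?_ ?_ hsum
  · simp
  · simp only [ne_eq, Multiset.map_eq_zero, Finset.val_eq_zero, Finset.range_eq_empty_iff]
    omega
  · intro x hx
    obtain ⟨i, hi, rfl⟩ := Multiset.mem_map.mp hx
    exact hβ i (by simpa using hi)
end

section
/- Let Φ be a finite reduced crystallographic root system in a finite-dimensional real inner product space with a fixed base Δ. If U is a symmetric closed subset of Φ containing every simple root of Δ, then U = Φ. -/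
open scoped RealInnerProductSpace

/-- A base (set of simple roots) of a root system `Φ`: a linearly independent
subset such that every root is an integer combination of elements of `Δ` with all
coefficients of the same sign. -/
def IsBase {V : Type*} [NormedAddCommGroup V] [InnerProductSpace ℝ V]
    (Φ Δ : Set V) : Prop :=
  Δ ⊆ Φ ∧ LinearIndependent ℝ ((↑) : Δ → V) ∧
    ∀ α ∈ Φ, ∃ c : V →₀ ℤ, (c.support : Set V) ⊆ Δ ∧
      α = c.sum (fun v n => (n : ℝ) • v) ∧ ((∀ v, 0 ≤ c v) ∨ (∀ v, c v ≤ 0))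

/-- A root system is irreducible if it cannot be partitioned into two nonempty
orthogonal subsets. -/
def IsIrreducibleRootSystem {V : Type*} [NormedAddCommGroup V] [InnerProductSpace ℝ V]
    (Φ : Set V) : Prop :=
  ¬ ∃ S T : Set V, S.Nonempty ∧ T.Nonempty ∧ Φ = S ∪ T ∧
      ∀ x ∈ S, ∀ y ∈ T, ⟪x, y⟫ = 0

/-- A simple root path: a finite sequence `β 0, β 1, …, β (k-1)` of pairwise
distinct simple roots in `Δ` such that consecutive roots are non-orthogonal. -/
def IsSimpleRootPath {V : Type*} [NormedAddCommGroup V] [InnerProductSpace ℝ V]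
    (Δ : Set V) (k : ℕ) (β : ℕ → V) : Prop :=
  1 ≤ k ∧ (∀ i < k, β i ∈ Δ) ∧ (∀ i < k, ∀ j < k, β i = β j → i = j) ∧
    ∀ i, i + 1 < k → ⟪β i, β (i + 1)⟫ ≠ 0

/-!
Fix a linear functional `f` with `f δ = 1` for every simple root `δ`, so that `f α` is the height
of `α`: an integer, nonzero on roots. A root `α` of positive height that is not simple has positive
inner product with some simple root `v` occurring in it, and the crystallographic condition then
makes `α - v` a root of height one less. As roots have nonzero height, `α - v` is again positive,
so by induction on the height and closedness every positive root lies in `U`; the negative roots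
follow from `-U = U`.
-/

lemma LinearMap.map_finsuppSum_intCast_smul_of_eq_one {V : Type*} [AddCommGroup V] [Module ℝ V]
    {Δ : Set V} (f : V →ₗ[ℝ] ℝ) (hf : ∀ δ ∈ Δ, f δ = 1) {c : V →₀ ℤ}
    (hc : (c.support : Set V) ⊆ Δ) :
    f (c.sum fun v n => (n : ℝ) • v) = ((c.sum fun _ n => n : ℤ) : ℝ) := by
  rw [map_finsuppSum, Finsupp.sum, Finsupp.sum, Int.cast_sum]
  refine Finset.sum_congr rfl fun v hv => ?_
  rw [map_smul, hf v (hc hv), smul_eq_mul, mul_one]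

section InnerProductSpace

variable {V : Type*} [NormedAddCommGroup V] [InnerProductSpace ℝ V]

lemma two_inner_div_mul_two_inner_div_le_four (α β : V) :
    2 * ⟪α, β⟫ / ⟪β, β⟫ * (2 * ⟪β, α⟫ / ⟪α, α⟫) ≤ 4 := by
  rw [div_mul_div_comm, real_inner_comm α β]
  refine div_le_of_le_mul₀ (mul_nonneg real_inner_self_nonneg real_inner_self_nonneg)
    zero_le_four ?_
  nlinarith [real_inner_mul_inner_self_le α β]

lemma eq_of_two_inner_div_eq_two {α β : V} (h₁ : 2 * ⟪α, β⟫ / ⟪β, β⟫ = 2)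
    (h₂ : 2 * ⟪β, α⟫ / ⟪α, α⟫ = 2) : α = β := by
  have hβ : ⟪β, β⟫ ≠ 0 := by intro h; rw [h, div_zero] at h₁; norm_num at h₁
  have hα : ⟪α, α⟫ ≠ 0 := by intro h; rw [h, div_zero] at h₂; norm_num at h₂
  rw [div_eq_iff hβ] at h₁
  rw [div_eq_iff hα, real_inner_comm] at h₂
  rw [← sub_eq_zero, ← inner_self_eq_zero (𝕜 := ℝ), inner_sub_sub_self, real_inner_comm α β]
  linarith

lemma exists_inner_pos_of_eq_finsuppSum_nonneg {α : V} (hα : α ≠ 0) {c : V →₀ ℤ}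
    (hc : ∀ v, 0 ≤ c v) (hαc : α = c.sum fun v n => (n : ℝ) • v) :
    ∃ v ∈ c.support, 0 < ⟪α, v⟫ := by
  by_contra! h
  have : ⟪α, α⟫ ≤ 0 := calc
    ⟪α, α⟫ = ∑ v ∈ c.support, (c v : ℝ) * ⟪α, v⟫ := by
      nth_rewrite 2 [hαc]
      simp only [Finsupp.sum, inner_sum, real_inner_smul_right]
    _ ≤ 0 := Finset.sum_nonpos fun v hv =>
      mul_nonpos_of_nonneg_of_nonpos (by exact_mod_cast hc v) (h v hv)
  exact hα (real_inner_self_nonpos.mp this)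

end InnerProductSpace

namespace IsRootSystem

variable {V : Type*} [NormedAddCommGroup V] [InnerProductSpace ℝ V] [FiniteDimensional ℝ V]
  {Φ : Set V}

lemma inner_self_pos (hΦ : IsRootSystem Φ) {α : V} (hα : α ∈ Φ) : 0 < ⟪α, α⟫ :=
  real_inner_self_pos.mpr (hΦ.ne_zero α hα)

lemma neg_mem_s4 (hΦ : IsRootSystem Φ) {α : V} (hα : α ∈ Φ) : -α ∈ Φ := by
  have h := hΦ.reflection_mem α hα α hα
  rwa [mul_div_assoc, div_self (hΦ.inner_self_pos hα).ne', mul_one, two_smul, sub_add_cancel_left]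
    at h

lemma sub_mem_of_inner_pos (hΦ : IsRootSystem Φ) {α β : V} (hα : α ∈ Φ) (hβ : β ∈ Φ)
    (hne : α ≠ β) (hpos : 0 < ⟪α, β⟫) : α - β ∈ Φ := by
  obtain ⟨m, hm⟩ := hΦ.crystallographic β hβ α hα
  obtain ⟨n, hn⟩ := hΦ.crystallographic α hα β hβ
  have hm0 : 0 < m := by
    have : 0 < 2 * ⟪α, β⟫ / ⟪β, β⟫ := by have := hΦ.inner_self_pos hβ; positivity
    exact_mod_cast hm ▸ this
  have hn0 : 0 < n := by
    have : 0 < 2 * ⟪β, α⟫ / ⟪α, α⟫ := by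
      have := hΦ.inner_self_pos hα; rw [real_inner_comm]; positivity
    exact_mod_cast hn ▸ this
  have hmn : m * n ≤ 4 := by
    exact_mod_cast hm ▸ hn ▸ two_inner_div_mul_two_inner_div_le_four α β
  -- otherwise `m = n = 2`, which forces `α = β`
  obtain hm1 | hn1 : m = 1 ∨ n = 1 := by
    by_contra! h
    have hm2 : m = 2 := by nlinarith [h.1.lt_of_le' hm0, h.2.lt_of_le' hn0]
    have hn2 : n = 2 := by nlinarith [h.1.lt_of_le' hm0, h.2.lt_of_le' hn0]
    exact hne (eq_of_two_inner_div_eq_two (by rw [hm, hm2]; norm_num) (by rw [hn, hn2]; norm_num))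
  · have h := hΦ.reflection_mem β hβ α hα
    rwa [hm, hm1, Int.cast_one, one_smul] at h
  · have h := hΦ.neg_mem_s4 (hΦ.reflection_mem α hα β hβ)
    rwa [hn, hn1, Int.cast_one, one_smul, neg_sub] at h

end IsRootSystem

namespace IsBase

variable {V : Type*} [NormedAddCommGroup V] [InnerProductSpace ℝ V] {Φ Δ : Set V}
  {f : V →ₗ[ℝ] ℝ}

lemma exists_apply_eq_intCast (hΔ : IsBase Φ Δ) (hf : ∀ δ ∈ Δ, f δ = 1) {α : V} (hα : α ∈ Φ) :
    ∃ k : ℤ, f α = k := by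
  obtain ⟨c, hc, rfl, -⟩ := hΔ.2.2 α hα
  exact ⟨_, f.map_finsuppSum_intCast_smul_of_eq_one hf hc⟩

variable [FiniteDimensional ℝ V]

lemma apply_ne_zero (hΔ : IsBase Φ Δ) (hΦ : IsRootSystem Φ) (hf : ∀ δ ∈ Δ, f δ = 1) {α : V}
    (hα : α ∈ Φ) : f α ≠ 0 := by
  obtain ⟨c, hc, hαc, hsign⟩ := hΔ.2.2 α hα
  obtain ⟨v, hv⟩ : c.support.Nonempty := by
    rw [Finsupp.support_nonempty_iff]
    rintro rfl
    exact hΦ.ne_zero α hα (by simp [hαc])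
  rw [hαc, f.map_finsuppSum_intCast_smul_of_eq_one hf hc, Int.cast_ne_zero]
  rcases hsign with h | h
  · exact (Finset.sum_pos' (fun w _ => h w)
      ⟨v, hv, (h v).lt_of_ne' (Finsupp.mem_support_iff.mp hv)⟩).ne'
  · exact (Finset.sum_neg' (fun w _ => h w)
      ⟨v, hv, (h v).lt_of_ne (Finsupp.mem_support_iff.mp hv)⟩).ne

lemma exists_sub_mem_of_apply_pos (hΔ : IsBase Φ Δ) (hΦ : IsRootSystem Φ)
    (hf : ∀ δ ∈ Δ, f δ = 1) {α : V} (hα : α ∈ Φ) (hpos : 0 < f α) (hαΔ : α ∉ Δ) :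
    ∃ v ∈ Δ, α - v ∈ Φ := by
  obtain ⟨c, hc, hαc, hsign⟩ := hΔ.2.2 α hα
  have hc_nonneg : ∀ v, 0 ≤ c v := hsign.resolve_right fun h => hpos.not_ge <| by
    rw [hαc, f.map_finsuppSum_intCast_smul_of_eq_one hf hc, Int.cast_nonpos]
    exact Finset.sum_nonpos fun v _ => h v
  obtain ⟨v, hv, hαv⟩ := exists_inner_pos_of_eq_finsuppSum_nonneg (hΦ.ne_zero α hα) hc_nonneg hαc
  have hvΔ : v ∈ Δ := hc hv
  exact ⟨v, hvΔ, hΦ.sub_mem_of_inner_pos hα (hΔ.1 hvΔ) (fun h => hαΔ (h ▸ hvΔ)) hαv⟩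

end IsBase

namespace IsClosedSubset

variable {V : Type*} [NormedAddCommGroup V] [InnerProductSpace ℝ V] [FiniteDimensional ℝ V]
  {Φ Δ U : Set V} {f : V →ₗ[ℝ] ℝ}

lemma mem_of_apply_eq_natCast (hU : IsClosedSubset Φ U) (hΦ : IsRootSystem Φ)
    (hΔ : IsBase Φ Δ) (hf : ∀ δ ∈ Δ, f δ = 1) (hΔU : Δ ⊆ U) (n : ℕ) :
    ∀ α ∈ Φ, f α = n → α ∈ U := by
  induction n using Nat.strong_induction_on with
  | _ n ih =>
  intro α hα hαn
  by_cases hαΔ : α ∈ Δ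
  · exact hΔU hαΔ
  have hpos : 0 < f α := (hαn ▸ n.cast_nonneg).lt_of_ne' (hΔ.apply_ne_zero hΦ hf hα)
  have hn : 0 < n := by exact_mod_cast hαn ▸ hpos
  obtain ⟨v, hvΔ, hsub⟩ := hΔ.exists_sub_mem_of_apply_pos hΦ hf hα hpos hαΔ
  have hsubU : α - v ∈ U :=
    ih (n - 1) (by omega) (α - v) hsub (by rw [map_sub, hαn, hf v hvΔ, Nat.cast_pred hn])
  simpa using hU.2 _ hsubU v (hΔU hvΔ) (by simpa using hα)

lemma mem_of_apply_pos (hU : IsClosedSubset Φ U) (hΦ : IsRootSystem Φ) (hΔ : IsBase Φ Δ)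
    (hf : ∀ δ ∈ Δ, f δ = 1) (hΔU : Δ ⊆ U) {α : V} (hα : α ∈ Φ) (hpos : 0 < f α) : α ∈ U := by
  obtain ⟨k, hk⟩ := hΔ.exists_apply_eq_intCast hf hα
  lift k to ℕ using (by exact_mod_cast hk ▸ hpos.le)
  exact hU.mem_of_apply_eq_natCast hΦ hΔ hf hΔU k α hα hk

end IsClosedSubset

/-- A symmetric closed subset of a root system containing every simple root is the
whole root system. -/
theorem symmetric_closed_subset_eq_of_base_subset {V : Type*} [NormedAddCommGroup V]
    [InnerProductSpace ℝ V] [FiniteDimensional ℝ V] (Φ Δ U : Set V)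
    (hΦ : IsRootSystem Φ) (hΔ : IsBase Φ Δ) (hU : IsClosedSubset Φ U)
    (hsym : -U = U) (hΔU : Δ ⊆ U) : U = Φ := by
  obtain ⟨f, hf⟩ := Module.exists_dual_forall_apply_eq_one (s := Δ) (v := id) hΔ.2.1
  refine hU.1.antisymm fun α hα => ?_
  rcases (hΔ.apply_ne_zero hΦ hf hα).lt_or_gt with hneg | hpos
  · rw [← hsym, Set.mem_neg]
    exact hU.mem_of_apply_pos hΦ hΔ hf hΔU (hΦ.neg_mem_s4 hα) (by simpa using hneg)
  · exact hU.mem_of_apply_pos hΦ hΔ hf hΔU hα hpos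
end
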